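/- Let ψ₁, ψ₂ be n.s.f. weights on a von Neumann algebra A and b : N → A an injective normal *-antihomomorphism. Suppose both ψ₁ and ψ₂ satisfy the (b,γ) property for a fixed one-parameter automorphism group γ_t of N, i.e. σ^{ψᵢ}_t(b(n)) = b(γ_t(n)) for all n, t. Then the Connes cocycle (Dψ₁ : Dψ₂)_t commutes with b(N), i.e. (Dψ₁:Dψ₂)_t ∈ A ∩ b(N)'. -/
import Mathlib


/-- If ψ₁, ψ₂ are n.s.f. weights on A both satisfying the (b,γ)
property (σ^{ψᵢ}_t(b(n)) = b(γ_t(n))) for a fixed one-parameter automorphism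
group γ of N, then the Connes cocycle (Dψ₁ : Dψ₂)_t commutes with b(N). -/
theorem cocycle_in_relative_commutant_of_b
    {N A : Type*} [Monoid A] [StarMul A]
    (b : N → A)
    -- the one-parameter automorphism group γ of N (with each γ_t surjective)
    (γ : ℝ → N → N) (hγsurj : ∀ t, Function.Surjective (γ t))
    -- the modular automorphism groups of ψ₁ and ψ₂
    (σ₁ σ₂ : ℝ → A → A)
    -- the (b,γ) property for both weights
    (hγ₁ : ∀ (t : ℝ) (n : N), σ₁ t (b n) = b (γ t n))
    (hγ₂ : ∀ (t : ℝ) (n : N), σ₂ t (b n) = b (γ t n))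
    -- the Connes cocycle u_t = (Dψ₁ : Dψ₂)_t
    (u : ℝ → A)
    (hu_unit : ∀ t, u t * star (u t) = 1 ∧ star (u t) * u t = 1)
    (hu : ∀ (x : A) (t : ℝ), σ₁ t x = u t * σ₂ t x * star (u t)) :
    ∀ (t : ℝ) (n : N), Commute (u t) (b n) := by
  intro t n
  obtain ⟨m, hm⟩ := hγsurj t n
  have h1 : b n = u t * b n * star (u t) := by
    have := hu (b m) t
    rw [hγ₁, hγ₂, hm] at this
    exact this
  have h2 : b n * u t = u t * b n := by
    calc b n * u t = u t * b n * star (u t) * u t := by rw [← h1]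
    _ = u t * b n * (star (u t) * u t) := by rw [mul_assoc]
    _ = u t * b n := by rw [(hu_unit t).2, mul_one]
  exact h2.symm
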